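/- arXiv:1711.03627 — 5 statements merged into one kernel-verified Lean document; each statement's English description precedes it below -/
import Mathlib

section
/- Let (X⁺, T) be a topologically transitive locally compact one-sided countable Markov shift and φ a continuous potential. Let λ > 0 and let μ be a non-zero Radon measure with L_φ* μ = λ μ. Then μ([a]) > 0 for every state a ∈ S, where [a] = {x : x₀ = a}. -/
/-!
The cylinders `[b]` cover the shift, so a non-zero measure charges one of them. Conformality
propagates positivity backwards along transitions: if `s → t` is allowed, then on `[t]` the
function `L_φ 1_[s]` is at least `e^{φ(s z)} > 0` (the preimage `s z` of `z` lies in `[s]`), so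
`λ μ[s] = ∫ L_φ 1_[s] dμ ≥ ∫_[t] e^{φ(s z)} dμ > 0`.
By transitivity every state leads to `b`, hence every cylinder is charged.
-/

open MeasureTheory ENNReal

variable {S : Type*}

/-- The one-sided topological Markov shift over alphabet `S` with transition relation `Adj`. -/
abbrev MShift (Adj : S → S → Prop) : Type _ :=
  {x : ℕ → S // ∀ i, Adj (x i) (x (i + 1))}

/-- The left shift map. -/
def shiftMap (Adj : S → S → Prop) (x : MShift Adj) : MShift Adj :=
  ⟨fun i => x.1 (i + 1), fun i => x.2 (i + 1)⟩

/-- The Ruelle (transfer) operator on non-negative functions. -/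
noncomputable def Ruelle (Adj : S → S → Prop) (φ : MShift Adj → ℝ)
    (f : MShift Adj → ℝ≥0∞) (x : MShift Adj) : ℝ≥0∞ :=
  ∑' y : {y : MShift Adj // shiftMap Adj y = x}, ENNReal.ofReal (Real.exp (φ y.1)) * f y.1

/-- The cylinder set `[a] = {x : x₀ = a}`. -/
def cylA (Adj : S → S → Prop) (a : S) : Set (MShift Adj) := {x | x.1 0 = a}

/-- Topological transitivity: every state can be reached from every state. -/
def TransitiveShift (Adj : S → S → Prop) : Prop :=
  ∀ a b : S, ∃ (n : ℕ) (x : MShift Adj), x.1 0 = a ∧ ((shiftMap Adj)^[n] x).1 0 = b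

/-- Local compactness: each state has finitely many followers. -/
def LocFin (Adj : S → S → Prop) : Prop := ∀ a : S, {b : S | Adj a b}.Finite

section Prepend

variable {Adj : S → S → Prop}

lemma measurable_coord [MeasurableSpace S] (i : ℕ) : Measurable fun y : MShift Adj => y.1 i :=
  (measurable_pi_apply i).comp measurable_subtype_coe

lemma measurableSet_cylA [MeasurableSpace S] [MeasurableSingletonClass S] (a : S) :
    MeasurableSet (cylA Adj a) :=
  measurable_coord 0 (measurableSet_singleton a)

open Classical in
/-- The point `s z` when the transition `s → z₀` is allowed, and `z` otherwise. -/
noncomputable def prepend (s : S) (z : MShift Adj) : MShift Adj :=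
  ⟨fun i => if Adj s (z.1 0) then Nat.casesOn i s z.1 else z.1 i, by
    intro i
    by_cases h : Adj s (z.1 0)
    · cases i with
      | zero => simp [h]
      | succ j => simpa [h] using z.2 j
    · simpa [h] using z.2 i⟩

lemma prepend_coord_zero {s : S} {z : MShift Adj} (h : Adj s (z.1 0)) :
    (prepend s z).1 0 = s := by
  simp [prepend, h]

lemma shiftMap_prepend {s : S} {z : MShift Adj} (h : Adj s (z.1 0)) :
    shiftMap Adj (prepend s z) = z := by
  ext i
  simp [shiftMap, prepend, h]

lemma measurable_prepend [MeasurableSpace S] [DiscreteMeasurableSpace S] (s : S) :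
    Measurable (prepend (Adj := Adj) s) := by
  have hA : MeasurableSet {z : MShift Adj | Adj s (z.1 0)} :=
    measurable_coord 0 (MeasurableSet.of_discrete (s := {t | Adj s t}))
  refine Measurable.subtype_mk (measurable_pi_lambda _ fun i => ?_)
  cases i with
  | zero => exact Measurable.ite hA measurable_const (measurable_coord 0)
  | succ j => exact Measurable.ite hA (measurable_coord j) (measurable_coord (j + 1))

end Prepend

lemma mul_le_ruelle_shiftMap {Adj : S → S → Prop} (φ : MShift Adj → ℝ) (f : MShift Adj → ℝ≥0∞)
    (y : MShift Adj) : ENNReal.ofReal (Real.exp (φ y)) * f y ≤ Ruelle Adj φ f (shiftMap Adj y) :=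
  ENNReal.le_tsum (⟨y, rfl⟩ : {y' : MShift Adj // shiftMap Adj y' = shiftMap Adj y})

theorem measure_cylA_pos_of_adj [MeasurableSpace S] [DiscreteMeasurableSpace S]
    {Adj : S → S → Prop} {φ : MShift Adj → ℝ} (hφ : Measurable φ) {μ : Measure (MShift Adj)}
    {c : ℝ≥0∞} (hconf : ∀ f : MShift Adj → ℝ≥0∞, Measurable f →
      ∫⁻ x, Ruelle Adj φ f x ∂μ = c * ∫⁻ x, f x ∂μ)
    {s t : S} (hst : Adj s t) (ht : 0 < μ (cylA Adj t)) : 0 < μ (cylA Adj s) := by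
  set g : MShift Adj → ℝ≥0∞ := fun z => ENNReal.ofReal (Real.exp (φ (prepend s z)))
  have hg : Measurable g :=
    ENNReal.measurable_ofReal.comp (Real.measurable_exp.comp (hφ.comp (measurable_prepend s)))
  have hmin : (cylA Adj t).indicator g ≤ Ruelle Adj φ ((cylA Adj s).indicator 1) := by
    intro z
    by_cases hz : z ∈ cylA Adj t
    · have hadj : Adj s (z.1 0) := hz ▸ hst
      have hmem : prepend s z ∈ cylA Adj s := prepend_coord_zero hadj
      calc (cylA Adj t).indicator g z
          = ENNReal.ofReal (Real.exp (φ (prepend s z))) *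
              (cylA Adj s).indicator 1 (prepend s z) := by
            simp [Set.indicator_of_mem hz, Set.indicator_of_mem hmem, g]
        _ ≤ Ruelle Adj φ _ (shiftMap Adj (prepend s z)) := mul_le_ruelle_shiftMap φ _ _
        _ = _ := by rw [shiftMap_prepend hadj]
    · simp [Set.indicator_of_notMem hz]
  have hpos : 0 < ∫⁻ z in cylA Adj t, g z ∂μ := by
    rw [setLIntegral_pos_iff hg]
    have hsupp : Function.support g = Set.univ :=
      Set.eq_univ_of_forall fun z => by simp [g, Real.exp_pos]
    rwa [hsupp, Set.univ_inter]
  have hmul : 0 < c * μ (cylA Adj s) := by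
    rw [← lintegral_indicator_one (measurableSet_cylA s),
      ← hconf _ (measurable_one.indicator (measurableSet_cylA s))]
    rw [← lintegral_indicator (measurableSet_cylA t)] at hpos
    exact hpos.trans_le (lintegral_mono hmin)
  exact (ENNReal.mul_pos_iff.1 hmul).2

theorem TransitiveShift.forall_of_backward_closed {Adj : S → S → Prop}
    (htrans : TransitiveShift Adj) {P : S → Prop} (hP : ∀ {s t}, Adj s t → P t → P s)
    {b : S} (hb : P b) (a : S) : P a := by
  obtain ⟨n, x, rfl, hxn⟩ := htrans a b
  subst hxn
  induction n generalizing x with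
  | zero => exact hb
  | succ n ih => exact hP (x.2 0) (ih (shiftMap Adj x) hb)

lemma exists_measure_cylA_pos [Countable S] [MeasurableSpace S] {Adj : S → S → Prop}
    {μ : Measure (MShift Adj)} (hμ : μ ≠ 0) : ∃ b : S, 0 < μ (cylA Adj b) := by
  by_contra! h
  have hcover : (⋃ b : S, cylA Adj b) = Set.univ :=
    Set.eq_univ_of_forall fun x => Set.mem_iUnion.2 ⟨x.1 0, rfl⟩
  refine hμ (Measure.measure_univ_eq_zero.1 ?_)
  rw [← hcover]
  exact measure_iUnion_null fun b => nonpos_iff_eq_zero.1 (h b)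

theorem conformal_pos_on_cylinders_general [Countable S] [MeasurableSpace S]
    [MeasurableSingletonClass S] [TopologicalSpace S] [DiscreteTopology S]
    (Adj : S → S → Prop) (htrans : TransitiveShift Adj)
    (φ : MShift Adj → ℝ) (hφ : Continuous φ) (lam : ℝ)
    (μ : Measure (MShift Adj)) (hμ : μ ≠ 0)
    (hconf : ∀ f : MShift Adj → ℝ≥0∞, Measurable f →
      ∫⁻ x, Ruelle Adj φ f x ∂μ = ENNReal.ofReal lam * ∫⁻ x, f x ∂μ) :
    ∀ a : S, 0 < μ (cylA Adj a) := by
  obtain ⟨b, hb⟩ := exists_measure_cylA_pos hμ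
  exact htrans.forall_of_backward_closed (measure_cylA_pos_of_adj hφ.measurable hconf) hb

/-- Every non-zero `λ`-conformal Radon measure gives positive mass to every cylinder `[a]`. -/
theorem conformal_pos_on_cylinders [Countable S] [MeasurableSpace S]
    [MeasurableSingletonClass S] [TopologicalSpace S] [DiscreteTopology S]
    (Adj : S → S → Prop) (htrans : TransitiveShift Adj) (hloc : LocFin Adj)
    (φ : MShift Adj → ℝ) (hφ : Continuous φ) (lam : ℝ) (hlam : 0 < lam)
    (μ : Measure (MShift Adj)) (hμ : μ ≠ 0)
    (hRadon : ∀ K : Set (MShift Adj), IsCompact K → μ K ≠ ⊤)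
    (hconf : ∀ f : MShift Adj → ℝ≥0∞, Measurable f →
      ∫⁻ x, Ruelle Adj φ f x ∂μ = ENNReal.ofReal lam * ∫⁻ x, f x ∂μ) :
    ∀ a : S, 0 < μ (cylA Adj a) :=
  conformal_pos_on_cylinders_general Adj htrans φ hφ lam μ hμ hconf
end

section
/- Let (X⁺, T) be a transitive locally compact one-sided countable Markov shift with potential φ of summable variations, and λ > 0. If the Green's function G(f, x | λ) = Σ_{n≥0} λ⁻ⁿ (L_φⁿ f)(x) is finite for one non-zero f ∈ C_c⁺(X⁺) and one x ∈ X⁺, then it is finite for every f ∈ C_c⁺(X⁺) and every x ∈ X⁺. In particular, λ-transience does not depend on the choice of f and x. -/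
open MeasureTheory ENNReal Filter Topology

variable {S : Type*}

/-- The Green's function `G(f, x | λ) = Σ_n λ⁻ⁿ (L_φⁿ f)(x)`. -/
noncomputable def Green (Adj : S → S → Prop) (φ : MShift Adj → ℝ) (lam : ℝ)
    (f : MShift Adj → ℝ≥0∞) (x : MShift Adj) : ℝ≥0∞ :=
  ∑' n : ℕ, ENNReal.ofReal ((lam ^ n)⁻¹) * ((Ruelle Adj φ)^[n] f) x

/-- Indicator function of the cylinder `[a]`. -/
noncomputable def cylInd (Adj : S → S → Prop) (a : S) : MShift Adj → ℝ≥0∞ :=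
  (cylA Adj a).indicator 1

/-- Set of values `|φ(x) − φ(y)|` over pairs agreeing in their first `m` coordinates. -/
def varSet (Adj : S → S → Prop) (φ : MShift Adj → ℝ) (m : ℕ) : Set ℝ :=
  {r | ∃ x y : MShift Adj, (∀ i < m, x.1 i = y.1 i) ∧ r = |φ x - φ y|}

/-- The `m`-th variation of `φ`. -/
noncomputable def Var (Adj : S → S → Prop) (φ : MShift Adj → ℝ) (m : ℕ) : ℝ :=
  sSup (varSet Adj φ m)

/-- `φ` has summable variations. -/
def SummableVar (Adj : S → S → Prop) (φ : MShift Adj → ℝ) : Prop :=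
  (∀ m, BddAbove (varSet Adj φ m)) ∧ Summable (Var Adj φ)

/-- A non-negative real function viewed as `ℝ≥0∞`-valued. -/
noncomputable def ofR {Adj : S → S → Prop} (f : MShift Adj → ℝ) : MShift Adj → ℝ≥0∞ :=
  fun x => ENNReal.ofReal (f x)

/-- `λ`-transience: the Green's function of every cylinder is finite everywhere. -/
def Transient (Adj : S → S → Prop) (φ : MShift Adj → ℝ) (lam : ℝ) : Prop :=
  ∀ (a : S) (x : MShift Adj), Green Adj φ lam (cylInd Adj a) x ≠ ⊤

/-! A non-zero continuous `f₀ ≥ 0` dominates a multiple of the indicator of some cylinder `C`,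
so `G(1_C, x₀ | λ) < ∞`. Summable variations give bounded distortion: for `n` beyond the length of
`C`, `Lⁿ1_C` takes comparable values at points with the same first symbol. By transitivity every
`z` has a point `z'` with the same first symbol and `T^k z' = x₀`, and `G(·, z')` is controlled by
`G(·, x₀)`. Transitivity also yields, for every state `b`, an admissible word from `C` to `b`,
whence `e^{S_kφ} 1_[b] ≲ L^k 1_C` and `G(1_[b], x) < ∞`. Finally a compactly supported `f` is
dominated by finitely many `1_[b]`. -/

namespace MShift

variable {Adj : S → S → Prop}

lemma shiftMap_iterate_apply (k : ℕ) (x : MShift Adj) (i : ℕ) :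
    ((shiftMap Adj)^[k] x).1 i = x.1 (i + k) := by
  induction k generalizing x with
  | zero => rfl
  | succ k ih => rw [Function.iterate_succ_apply, ih]; rfl

lemma eq_of_agree_of_shiftMap_iterate_eq {n : ℕ} {z w : MShift Adj}
    (hlt : ∀ i < n, z.1 i = w.1 i) (hshift : (shiftMap Adj)^[n] z = (shiftMap Adj)^[n] w) :
    z = w := by
  refine Subtype.ext (funext fun i => ?_)
  rcases lt_or_ge i n with hi | hi
  · exact hlt i hi
  · have := congrArg (fun y : MShift Adj => y.1 (i - n)) hshift
    simpa only [shiftMap_iterate_apply, Nat.sub_add_cancel hi] using this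

def splice (k : ℕ) (w y : MShift Adj) (h : w.1 k = y.1 0) : MShift Adj :=
  ⟨fun i => if i < k then w.1 i else y.1 (i - k), fun i => by
    by_cases hi : i + 1 < k
    · simp only [if_pos (Nat.lt_of_succ_lt hi), if_pos hi]
      exact w.2 i
    by_cases hik : i + 1 = k
    · subst hik
      simp only [Nat.lt_succ_self, if_true, lt_irrefl, if_false, Nat.sub_self, ← h]
      exact w.2 i
    · simp only [if_neg (by omega : ¬ i < k), if_neg hi, show i + 1 - k = i - k + 1 by omega]
      exact y.2 _⟩

lemma splice_apply_of_le {k : ℕ} {w y : MShift Adj} {h : w.1 k = y.1 0} {i : ℕ} (hi : i ≤ k) :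
    (splice k w y h).1 i = w.1 i := by
  rcases hi.lt_or_eq with hi | rfl
  · exact if_pos hi
  · exact (if_neg (lt_irrefl i)).trans (by rw [Nat.sub_self, h])

lemma shiftMap_iterate_splice {k : ℕ} {w y : MShift Adj} {h : w.1 k = y.1 0} :
    (shiftMap Adj)^[k] (splice k w y h) = y := by
  refine Subtype.ext (funext fun i => ?_)
  rw [shiftMap_iterate_apply]
  exact (if_neg (by omega)).trans (by rw [Nat.add_sub_cancel])

def cyl (N : ℕ) (p : MShift Adj) : Set (MShift Adj) := {y | ∀ i ≤ N, y.1 i = p.1 i}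

lemma exists_cyl_subset_of_mem_nhds [TopologicalSpace S] {s : Set (MShift Adj)}
    {p : MShift Adj} (hs : s ∈ 𝓝 p) : ∃ N, cyl N p ⊆ s := by
  obtain ⟨t, ht, hts⟩ :=
    Filter.mem_comap.mp (Topology.IsInducing.subtypeVal.nhds_eq_comap p ▸ hs)
  rw [nhds_pi, Filter.mem_pi] at ht
  obtain ⟨I, hI, u, hu, hIu⟩ := ht
  obtain ⟨N, hN⟩ := hI.bddAbove
  refine ⟨N, fun y hy => hts (hIu fun i hi => ?_)⟩
  rw [hy i (hN hi)]
  exact mem_of_mem_nhds (hu i)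

end MShift

open MShift

lemma TransitiveShift.exists_agree_reach {Adj : S → S → Prop} (htrans : TransitiveShift Adj)
    (p : MShift Adj) (N : ℕ) (b : S) :
    ∃ (k : ℕ) (u : MShift Adj), N ≤ k ∧ (∀ i ≤ N, u.1 i = p.1 i) ∧ u.1 k = b := by
  obtain ⟨n, w, hw0, hwn⟩ := htrans (p.1 N) b
  rw [shiftMap_iterate_apply, Nat.zero_add] at hwn
  refine ⟨N + n, splice N p w hw0.symm, Nat.le_add_right N n,
    fun i hi => splice_apply_of_le hi, ?_⟩
  have := congrArg (fun y : MShift Adj => y.1 n) (shiftMap_iterate_splice (h := hw0.symm))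
  simp only [shiftMap_iterate_apply] at this
  rw [add_comm, this, hwn]

section TransferOperator

variable {Adj : S → S → Prop} {φ : MShift Adj → ℝ}

noncomputable def birkhoffWeight (Adj : S → S → Prop) (φ : MShift Adj → ℝ) (n : ℕ)
    (y : MShift Adj) : ℝ≥0∞ :=
  ENNReal.ofReal (Real.exp (birkhoffSum (shiftMap Adj) φ n y))

lemma birkhoffWeight_ne_zero (n : ℕ) (y : MShift Adj) : birkhoffWeight Adj φ n y ≠ 0 :=
  ENNReal.ofReal_pos.mpr (Real.exp_pos _) |>.ne'

lemma birkhoffWeight_succ (n : ℕ) (y : MShift Adj) :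
    birkhoffWeight Adj φ (n + 1) y
      = ENNReal.ofReal (Real.exp (φ y)) * birkhoffWeight Adj φ n (shiftMap Adj y) := by
  rw [birkhoffWeight, birkhoffSum_succ', Real.exp_add, ENNReal.ofReal_mul (Real.exp_nonneg _),
    birkhoffWeight]

lemma ruelle_iterate_apply (f : MShift Adj → ℝ≥0∞) (n : ℕ) (x : MShift Adj) :
    ((Ruelle Adj φ)^[n] f) x
      = ∑' y : {y // (shiftMap Adj)^[n] y = x}, birkhoffWeight Adj φ n y * f y := by
  induction n generalizing f with
  | zero =>
    rw [tsum_eq_single (⟨x, rfl⟩ : {y // (shiftMap Adj)^[0] y = x})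
      fun y hy => absurd (Subtype.ext y.2) hy]
    simp [birkhoffWeight]
  | succ n ih =>
    let e := Equiv.sigmaSubtypeFiberEquivSubtype (shiftMap Adj)
      (p := fun z => (shiftMap Adj)^[n + 1] z = x) (q := fun y => (shiftMap Adj)^[n] y = x)
      fun z => by rw [Function.iterate_succ_apply]
    rw [Function.iterate_succ_apply, ih, ← e.tsum_eq, ENNReal.tsum_sigma']
    refine tsum_congr fun y => ?_
    rw [Ruelle, ← ENNReal.tsum_mul_left]
    refine tsum_congr fun z => ?_
    obtain ⟨z, hz⟩ := z
    change birkhoffWeight Adj φ n y * (_ * f z) = birkhoffWeight Adj φ (n + 1) z * f z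
    rw [birkhoffWeight_succ, hz]
    ring

lemma le_ruelle_iterate_apply (f : MShift Adj → ℝ≥0∞) {k : ℕ} {z x : MShift Adj}
    (h : (shiftMap Adj)^[k] z = x) :
    birkhoffWeight Adj φ k z * f z ≤ ((Ruelle Adj φ)^[k] f) x := by
  rw [ruelle_iterate_apply]
  exact ENNReal.le_tsum (⟨z, h⟩ : {y // (shiftMap Adj)^[k] y = x})

lemma green_eq_tsum (lam : ℝ) (f : MShift Adj → ℝ≥0∞) (x : MShift Adj) :
    Green Adj φ lam f x = ∑' n, ∑' y : {y // (shiftMap Adj)^[n] y = x},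
      ENNReal.ofReal ((lam ^ n)⁻¹) * (birkhoffWeight Adj φ n y * f y) := by
  simp only [Green, ruelle_iterate_apply, ENNReal.tsum_mul_left]

lemma green_mono {lam : ℝ} {f g : MShift Adj → ℝ≥0∞} (h : ∀ y, f y ≤ g y) (x : MShift Adj) :
    Green Adj φ lam f x ≤ Green Adj φ lam g x := by
  simp only [green_eq_tsum]
  gcongr with n y
  exact h y

lemma green_const_mul (lam : ℝ) (c : ℝ≥0∞) (f : MShift Adj → ℝ≥0∞) (x : MShift Adj) :
    Green Adj φ lam (fun y => c * f y) x = c * Green Adj φ lam f x := by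
  simp only [green_eq_tsum, ← ENNReal.tsum_mul_left]
  exact tsum_congr fun n => tsum_congr fun y => by ring

lemma green_finset_sum {ι : Type*} (lam : ℝ) (s : Finset ι) (f : ι → MShift Adj → ℝ≥0∞)
    (x : MShift Adj) :
    Green Adj φ lam (fun y => ∑ b ∈ s, f b y) x = ∑ b ∈ s, Green Adj φ lam (f b) x := by
  simp only [green_eq_tsum, Finset.mul_sum]
  rw [← Summable.tsum_finsetSum fun _ _ => ENNReal.summable]
  exact tsum_congr fun n => Summable.tsum_finsetSum fun _ _ => ENNReal.summable

lemma green_ruelle_iterate_le {lam : ℝ} (hlam : 0 < lam) (f : MShift Adj → ℝ≥0∞) (k : ℕ)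
    (x : MShift Adj) :
    Green Adj φ lam ((Ruelle Adj φ)^[k] f) x ≤ ENNReal.ofReal (lam ^ k) * Green Adj φ lam f x := by
  have hpow (n : ℕ) : ENNReal.ofReal ((lam ^ n)⁻¹)
      = ENNReal.ofReal (lam ^ k) * ENNReal.ofReal ((lam ^ (n + k))⁻¹) := by
    rw [← ENNReal.ofReal_mul (by positivity), pow_add]
    field_simp
  calc Green Adj φ lam ((Ruelle Adj φ)^[k] f) x
      = ∑' n, ENNReal.ofReal (lam ^ k)
          * (ENNReal.ofReal ((lam ^ (n + k))⁻¹) * ((Ruelle Adj φ)^[n + k] f) x) :=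
        tsum_congr fun n => by rw [hpow n, Function.iterate_add_apply, mul_assoc]
    _ = ENNReal.ofReal (lam ^ k) * ∑' n,
          ENNReal.ofReal ((lam ^ (n + k))⁻¹) * ((Ruelle Adj φ)^[n + k] f) x :=
        ENNReal.tsum_mul_left
    _ ≤ _ := by
      gcongr
      exact ENNReal.tsum_comp_le_tsum_of_injective (add_left_injective k)
        fun n => ENNReal.ofReal ((lam ^ n)⁻¹) * ((Ruelle Adj φ)^[n] f) x

lemma birkhoffWeight_mul_green_le {lam : ℝ} (hlam : 0 < lam) (f : MShift Adj → ℝ≥0∞) (k : ℕ)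
    (z : MShift Adj) :
    birkhoffWeight Adj φ k z * Green Adj φ lam f z
      ≤ ENNReal.ofReal (lam ^ k) * Green Adj φ lam f ((shiftMap Adj)^[k] z) := by
  calc birkhoffWeight Adj φ k z * Green Adj φ lam f z
      = ∑' n, ENNReal.ofReal ((lam ^ n)⁻¹)
          * (birkhoffWeight Adj φ k z * ((Ruelle Adj φ)^[n] f) z) := by
        rw [Green, ← ENNReal.tsum_mul_left]
        exact tsum_congr fun n => by ring
    _ ≤ Green Adj φ lam ((Ruelle Adj φ)^[k] f) ((shiftMap Adj)^[k] z) := by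
        rw [Green]
        gcongr with n
        rw [← Function.iterate_add_apply, add_comm, Function.iterate_add_apply]
        exact le_ruelle_iterate_apply _ rfl
    _ ≤ _ := green_ruelle_iterate_le hlam f k _

lemma green_ne_top_of_shiftMap_iterate {lam : ℝ} (hlam : 0 < lam) {f : MShift Adj → ℝ≥0∞}
    {k : ℕ} {z : MShift Adj} (h : Green Adj φ lam f ((shiftMap Adj)^[k] z) ≠ ⊤) :
    Green Adj φ lam f z ≠ ⊤ := by
  intro htop
  have hle := birkhoffWeight_mul_green_le (φ := φ) hlam f k z
  rw [htop, ENNReal.mul_top (birkhoffWeight_ne_zero k z), top_le_iff] at hle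
  exact ENNReal.mul_ne_top ENNReal.ofReal_ne_top h hle

end TransferOperator

section Distortion

variable {Adj : S → S → Prop} {φ : MShift Adj → ℝ}

lemma Var_nonneg (m : ℕ) : 0 ≤ Var Adj φ m :=
  Real.sSup_nonneg fun _ ⟨_, _, _, hr⟩ => hr ▸ abs_nonneg _

lemma abs_sub_le_Var (hbdd : ∀ m, BddAbove (varSet Adj φ m)) {m : ℕ} {x y : MShift Adj}
    (h : ∀ i < m, x.1 i = y.1 i) : |φ x - φ y| ≤ Var Adj φ m :=
  le_csSup (hbdd m) ⟨x, y, h, rfl⟩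

lemma birkhoffSum_le_of_agree (hvar : SummableVar Adj φ) {n : ℕ} {z w : MShift Adj}
    (h : ∀ i < n, z.1 i = w.1 i) :
    birkhoffSum (shiftMap Adj) φ n z ≤ birkhoffSum (shiftMap Adj) φ n w + ∑' m, Var Adj φ m := by
  have hterm : ∀ j ∈ Finset.range n, φ ((shiftMap Adj)^[j] z)
      ≤ φ ((shiftMap Adj)^[j] w) + Var Adj φ (n - 1 - j) := by
    intro j hj
    have hagree : ∀ i < n - 1 - j, ((shiftMap Adj)^[j] z).1 i = ((shiftMap Adj)^[j] w).1 i :=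
      fun i hi => by simp only [shiftMap_iterate_apply]; exact h _ (by omega)
    linarith [(abs_le.mp (abs_sub_le_Var hvar.1 hagree)).2]
  calc birkhoffSum (shiftMap Adj) φ n z
      ≤ ∑ j ∈ Finset.range n, (φ ((shiftMap Adj)^[j] w) + Var Adj φ (n - 1 - j)) :=
        Finset.sum_le_sum hterm
    _ = birkhoffSum (shiftMap Adj) φ n w + ∑ j ∈ Finset.range n, Var Adj φ j := by
        rw [Finset.sum_add_distrib, Finset.sum_range_reflect (Var Adj φ)]; rfl
    _ ≤ _ := by
        gcongr
        exact hvar.2.sum_le_tsum _ fun m _ => Var_nonneg m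

lemma birkhoffWeight_le_of_agree (hvar : SummableVar Adj φ) {n : ℕ} {z w : MShift Adj}
    (h : ∀ i < n, z.1 i = w.1 i) :
    birkhoffWeight Adj φ n z
      ≤ ENNReal.ofReal (Real.exp (∑' m, Var Adj φ m)) * birkhoffWeight Adj φ n w := by
  rw [birkhoffWeight, birkhoffWeight, ← ENNReal.ofReal_mul (Real.exp_nonneg _), ← Real.exp_add]
  gcongr
  linarith [birkhoffSum_le_of_agree hvar h]

lemma ruelle_iterate_le_of_head_eq (hvar : SummableVar Adj φ) {g : MShift Adj → ℝ≥0∞} {n : ℕ}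
    (hg : ∀ z w : MShift Adj, (∀ i ≤ n, z.1 i = w.1 i) → g z ≤ g w) {x y : MShift Adj}
    (hxy : x.1 0 = y.1 0) :
    ((Ruelle Adj φ)^[n] g) x
      ≤ ENNReal.ofReal (Real.exp (∑' m, Var Adj φ m)) * ((Ruelle Adj φ)^[n] g) y := by
  have hjoin (z : {z // (shiftMap Adj)^[n] z = x}) : z.1.1 n = y.1 0 := by
    have h0 := shiftMap_iterate_apply n z.1 0
    rw [z.2, Nat.zero_add] at h0
    rw [← hxy, h0]
  let ι (z : {z // (shiftMap Adj)^[n] z = x}) : {w // (shiftMap Adj)^[n] w = y} :=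
    ⟨splice n z.1 y (hjoin z), shiftMap_iterate_splice⟩
  have hι (z : {z // (shiftMap Adj)^[n] z = x}) (i : ℕ) (hi : i ≤ n) : z.1.1 i = (ι z).1.1 i :=
    (splice_apply_of_le (h := hjoin z) hi).symm
  have hι_inj : Function.Injective ι := fun z z' hzz' =>
    Subtype.ext <| eq_of_agree_of_shiftMap_iterate_eq
      (fun i hi => by rw [hι z i hi.le, hι z' i hi.le, hzz']) (by rw [z.2, z'.2])
  rw [ruelle_iterate_apply, ruelle_iterate_apply, ← ENNReal.tsum_mul_left]
  calc ∑' z : {z // (shiftMap Adj)^[n] z = x}, birkhoffWeight Adj φ n z * g z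
      ≤ ∑' z, ENNReal.ofReal (Real.exp (∑' m, Var Adj φ m))
          * (birkhoffWeight Adj φ n (ι z) * g (ι z)) := by
        refine ENNReal.tsum_le_tsum fun z => ?_
        rw [← mul_assoc]
        exact mul_le_mul' (birkhoffWeight_le_of_agree hvar fun i hi => hι z i hi.le)
          (hg _ _ (hι z))
    _ ≤ _ := ENNReal.tsum_comp_le_tsum_of_injective hι_inj
        fun w => ENNReal.ofReal (Real.exp (∑' m, Var Adj φ m)) * (birkhoffWeight Adj φ n w * g w)

end Distortion

lemma tsum_ne_top_of_le_mul_of_ge {a b : ℕ → ℝ≥0∞} {c : ℝ≥0∞} (N : ℕ) (ha : ∀ n < N, a n ≠ ⊤)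
    (hc : c ≠ ⊤) (hab : ∀ n ≥ N, a n ≤ c * b n) (hb : ∑' n, b n ≠ ⊤) : ∑' n, a n ≠ ⊤ := by
  rw [← ENNReal.summable.sum_add_tsum_nat_add' (k := N)]
  refine ENNReal.add_ne_top.mpr ⟨ENNReal.sum_ne_top.mpr fun n hn => ha n (by simpa using hn),
    ne_top_of_le_ne_top (ENNReal.mul_ne_top hc hb) ?_⟩
  calc ∑' n, a (n + N) ≤ ∑' n, c * b (n + N) := ENNReal.tsum_le_tsum fun n => hab _ le_add_self
    _ = c * ∑' n, b (n + N) := ENNReal.tsum_mul_left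
    _ ≤ c * ∑' n, b n :=
        mul_le_mul_right (ENNReal.tsum_comp_le_tsum_of_injective (add_left_injective N) b) c

section Green

variable {Adj : S → S → Prop} {φ : MShift Adj → ℝ} {lam : ℝ}

lemma indicator_cyl_le_of_agree {N n : ℕ} (hNn : N ≤ n) (p : MShift Adj) (z w : MShift Adj)
    (h : ∀ i ≤ n, z.1 i = w.1 i) :
    (cyl N p).indicator (1 : MShift Adj → ℝ≥0∞) z ≤ (cyl N p).indicator 1 w := by
  by_cases hz : z ∈ cyl N p
  · have hw : w ∈ cyl N p := fun i hi => (h i (hi.trans hNn)).symm.trans (hz i hi)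
    rw [Set.indicator_of_mem hz, Set.indicator_of_mem hw]
    exact le_rfl
  · rw [Set.indicator_of_notMem hz]
    exact zero_le

/-- An `n`-step preimage of `x` inside a cylinder of length `N + 1 ≥ n` is unique. -/
lemma ruelle_iterate_indicator_cyl_ne_top {N n : ℕ} (hn : n ≤ N + 1) (p x : MShift Adj) :
    ((Ruelle Adj φ)^[n] ((cyl N p).indicator 1)) x ≠ ⊤ := by
  rw [ruelle_iterate_apply]
  by_cases h : ∃ y₀ : {y // (shiftMap Adj)^[n] y = x}, y₀.1 ∈ cyl N p
  · obtain ⟨y₀, hy₀⟩ := h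
    have huniq (y : {y // (shiftMap Adj)^[n] y = x}) (hy : y ≠ y₀) : y.1 ∉ cyl N p :=
      fun hyC => hy <| Subtype.ext <| eq_of_agree_of_shiftMap_iterate_eq (n := n)
        (fun i hi => (hyC i (by omega)).trans (hy₀ i (by omega)).symm) (by rw [y.2, y₀.2])
    rw [tsum_eq_single y₀ fun y hy => by rw [Set.indicator_of_notMem (huniq y hy), mul_zero],
      Set.indicator_of_mem hy₀, Pi.one_apply, mul_one]
    exact ENNReal.ofReal_ne_top
  · rw [not_exists] at h
    simp [Set.indicator_of_notMem (h _)]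

lemma green_indicator_cyl_ne_top (htrans : TransitiveShift Adj) (hvar : SummableVar Adj φ)
    (hlam : 0 < lam) {N : ℕ} {p x₀ : MShift Adj}
    (hfin : Green Adj φ lam ((cyl N p).indicator 1) x₀ ≠ ⊤) (z : MShift Adj) :
    Green Adj φ lam ((cyl N p).indicator 1) z ≠ ⊤ := by
  obtain ⟨k, u, -, hu0, huk⟩ := htrans.exists_agree_reach z 0 (x₀.1 0)
  let z' := splice k u x₀ huk
  have hz'0 : z.1 0 = z'.1 0 := ((splice_apply_of_le (Nat.zero_le k)).trans (hu0 0 le_rfl)).symm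
  have hz' : Green Adj φ lam ((cyl N p).indicator 1) z' ≠ ⊤ :=
    green_ne_top_of_shiftMap_iterate hlam (k := k) (by rwa [shiftMap_iterate_splice])
  refine tsum_ne_top_of_le_mul_of_ge (c := ENNReal.ofReal (Real.exp (∑' m, Var Adj φ m))) N
    (fun n hn => ENNReal.mul_ne_top ENNReal.ofReal_ne_top
      (ruelle_iterate_indicator_cyl_ne_top (by omega) p z)) ENNReal.ofReal_ne_top
    (fun n hn => ?_) hz'
  rw [mul_left_comm]
  gcongr
  exact ruelle_iterate_le_of_head_eq hvar (indicator_cyl_le_of_agree hn p) hz'0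

lemma green_cylInd_ne_top (htrans : TransitiveShift Adj) (hvar : SummableVar Adj φ)
    (hlam : 0 < lam) {N : ℕ} {p : MShift Adj}
    (hcyl : ∀ z, Green Adj φ lam ((cyl N p).indicator 1) z ≠ ⊤) (b : S) (x : MShift Adj) :
    Green Adj φ lam (cylInd Adj b) x ≠ ⊤ := by
  obtain ⟨k, u, hNk, hup, huk⟩ := htrans.exists_agree_reach p N b
  set V := ENNReal.ofReal (Real.exp (∑' m, Var Adj φ m))
  -- every `y ∈ [b]` has the `k`-step preimage `u₀ ⋯ u_{k-1} y ∈ cyl N p`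
  have hpt (y : MShift Adj) : birkhoffWeight Adj φ k u * cylInd Adj b y
      ≤ V * ((Ruelle Adj φ)^[k] ((cyl N p).indicator 1)) y := by
    by_cases hy : y.1 0 = b
    · let w := splice k u y (huk.trans hy.symm)
      have hw : w ∈ cyl N p := fun i hi => (splice_apply_of_le (hi.trans hNk)).trans (hup i hi)
      calc birkhoffWeight Adj φ k u * cylInd Adj b y = birkhoffWeight Adj φ k u := by
            rw [cylInd, Set.indicator_of_mem (show y ∈ cylA Adj b from hy), Pi.one_apply, mul_one]
        _ ≤ V * (birkhoffWeight Adj φ k w * (cyl N p).indicator 1 w) := by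
            rw [Set.indicator_of_mem hw, Pi.one_apply, mul_one]
            exact birkhoffWeight_le_of_agree hvar fun i hi => (splice_apply_of_le hi.le).symm
        _ ≤ _ := by
            gcongr
            exact le_ruelle_iterate_apply _ shiftMap_iterate_splice
    · rw [cylInd, Set.indicator_of_notMem (show y ∉ cylA Adj b from hy), mul_zero]
      exact zero_le
  intro htop
  have hle : birkhoffWeight Adj φ k u * Green Adj φ lam (cylInd Adj b) x
      ≤ V * (ENNReal.ofReal (lam ^ k) * Green Adj φ lam ((cyl N p).indicator 1) x) := by
    rw [← green_const_mul]
    refine (green_mono hpt x).trans ?_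
    rw [green_const_mul]
    gcongr
    exact green_ruelle_iterate_le hlam _ k x
  rw [htop, ENNReal.mul_top (birkhoffWeight_ne_zero k u), top_le_iff] at hle
  exact ENNReal.mul_ne_top ENNReal.ofReal_ne_top
    (ENNReal.mul_ne_top ENNReal.ofReal_ne_top (hcyl x)) hle

end Green

section CompactSupport

variable [TopologicalSpace S] {Adj : S → S → Prop} {φ : MShift Adj → ℝ} {lam : ℝ}

lemma exists_green_indicator_cyl_ne_top {f₀ : MShift Adj → ℝ} (hf₀c : Continuous f₀)
    {p x₀ : MShift Adj} (hp : 0 < f₀ p) (hfin : Green Adj φ lam (ofR f₀) x₀ ≠ ⊤) :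
    ∃ N, Green Adj φ lam ((cyl N p).indicator 1) x₀ ≠ ⊤ := by
  obtain ⟨N, hN⟩ := exists_cyl_subset_of_mem_nhds
    ((isOpen_lt continuous_const hf₀c).mem_nhds (half_lt_self hp))
  have hpt (y : MShift Adj) :
      ENNReal.ofReal (f₀ p / 2) * (cyl N p).indicator 1 y ≤ ofR f₀ y := by
    by_cases hy : y ∈ cyl N p
    · rw [Set.indicator_of_mem hy, Pi.one_apply, mul_one]
      exact ENNReal.ofReal_le_ofReal (hN hy).le
    · rw [Set.indicator_of_notMem hy, mul_zero]
      exact zero_le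
  refine ⟨N, fun htop => hfin (top_le_iff.mp ?_)⟩
  calc ⊤ = ENNReal.ofReal (f₀ p / 2) * Green Adj φ lam ((cyl N p).indicator 1) x₀ := by
        rw [htop, ENNReal.mul_top (ENNReal.ofReal_pos.mpr (half_pos hp)).ne']
    _ = Green Adj φ lam (fun y => ENNReal.ofReal (f₀ p / 2) * (cyl N p).indicator 1 y) x₀ :=
        (green_const_mul lam _ _ x₀).symm
    _ ≤ Green Adj φ lam (ofR f₀) x₀ := green_mono hpt x₀

lemma exists_ofR_le_sum_cylInd [DiscreteTopology S] {f : MShift Adj → ℝ} (hfc : Continuous f)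
    (hfs : HasCompactSupport f) :
    ∃ (M : ℝ) (F : Finset S), ∀ y, ofR f y ≤ ∑ b ∈ F, ENNReal.ofReal M * cylInd Adj b y := by
  obtain ⟨M, hM⟩ := hfc.bddAbove_range_of_hasCompactSupport hfs
  have hF : ((fun y : MShift Adj => y.1 0) '' tsupport f).Finite :=
    (hfs.image ((continuous_apply 0).comp continuous_subtype_val)).finite_of_discrete
  refine ⟨M, hF.toFinset, fun y => ?_⟩
  by_cases hy : y ∈ tsupport f
  · calc ofR f y ≤ ENNReal.ofReal M * cylInd Adj (y.1 0) y := by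
          rw [cylInd, Set.indicator_of_mem (show y ∈ cylA Adj (y.1 0) from rfl), Pi.one_apply,
            mul_one]
          exact ENNReal.ofReal_le_ofReal (hM ⟨y, rfl⟩)
      _ ≤ _ := Finset.single_le_sum (f := fun b => ENNReal.ofReal M * cylInd Adj b y)
          (fun _ _ => zero_le) (hF.mem_toFinset.mpr ⟨y, hy, rfl⟩)
  · rw [ofR, image_eq_zero_of_notMem_tsupport hy, ENNReal.ofReal_zero]
    exact zero_le

lemma green_ofR_ne_top [DiscreteTopology S] {f : MShift Adj → ℝ} (hfc : Continuous f)
    (hfs : HasCompactSupport f) {x : MShift Adj} (h : ∀ b, Green Adj φ lam (cylInd Adj b) x ≠ ⊤) :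
    Green Adj φ lam (ofR f) x ≠ ⊤ := by
  obtain ⟨M, F, hle⟩ := exists_ofR_le_sum_cylInd hfc hfs
  refine ne_top_of_le_ne_top ?_ (green_mono hle x)
  rw [green_finset_sum]
  exact ENNReal.sum_ne_top.mpr fun b _ => by
    rw [green_const_mul]
    exact ENNReal.mul_ne_top ENNReal.ofReal_ne_top (h b)

end CompactSupport

theorem green_finite_everywhere_general [TopologicalSpace S] [DiscreteTopology S]
    (Adj : S → S → Prop) (htrans : TransitiveShift Adj)
    (φ : MShift Adj → ℝ) (hvar : SummableVar Adj φ) (lam : ℝ) (hlam : 0 < lam)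
    (f₀ : MShift Adj → ℝ) (hf₀c : Continuous f₀)
    (hf₀nn : 0 ≤ f₀) (hf₀ne : f₀ ≠ 0) (x₀ : MShift Adj)
    (hfin : Green Adj φ lam (ofR f₀) x₀ ≠ ⊤) :
    ∀ (f : MShift Adj → ℝ) (x : MShift Adj), Continuous f → HasCompactSupport f → 0 ≤ f →
      Green Adj φ lam (ofR f) x ≠ ⊤ := by
  intro f x hfc hfs _
  obtain ⟨p, hp⟩ := Function.ne_iff.mp hf₀ne
  obtain ⟨N, hN⟩ := exists_green_indicator_cyl_ne_top hf₀c ((hf₀nn p).lt_of_ne' hp) hfin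
  have hcyl := green_indicator_cyl_ne_top htrans hvar hlam hN
  exact green_ofR_ne_top hfc hfs fun b => green_cylInd_ne_top htrans hvar hlam hcyl b x

/-- If the Green's function `G(f₀, x₀ | λ)` is finite for a single non-zero
`f₀ ∈ C_c⁺(X⁺)` and a single point `x₀`, then `G(f, x | λ)` is finite for every
`f ∈ C_c⁺(X⁺)` and every `x`. -/
theorem green_finite_everywhere [Countable S] [TopologicalSpace S] [DiscreteTopology S]
    (Adj : S → S → Prop) (htrans : TransitiveShift Adj) (hloc : LocFin Adj)
    (φ : MShift Adj → ℝ) (hvar : SummableVar Adj φ) (lam : ℝ) (hlam : 0 < lam)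
    (f₀ : MShift Adj → ℝ) (hf₀c : Continuous f₀) (hf₀s : HasCompactSupport f₀)
    (hf₀nn : 0 ≤ f₀) (hf₀ne : f₀ ≠ 0) (x₀ : MShift Adj)
    (hfin : Green Adj φ lam (ofR f₀) x₀ ≠ ⊤) :
    ∀ (f : MShift Adj → ℝ) (x : MShift Adj), Continuous f → HasCompactSupport f → 0 ≤ f →
      Green Adj φ lam (ofR f) x ≠ ⊤ :=
  green_finite_everywhere_general Adj htrans φ hvar lam hlam f₀ hf₀c hf₀nn hf₀ne x₀ hfin
end

section
/- Let (X⁺, T) be a transitive locally compact one-sided countable Markov shift and φ a λ-transient potential with summable variations. Then for every two states a, b ∈ S there exist constants 0 < c_{a,b} ≤ C_{a,b} such that c_{a,b} G(1_{[b]}, x | λ) ≤ G(1_{[a]}, x | λ) ≤ C_{a,b} G(1_{[b]}, x | λ) for all x ∈ X⁺, where G(f, x | λ) = Σ_{n≥0} λ⁻ⁿ(L_φⁿ f)(x). -/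
open MeasureTheory ENNReal Filter Topology

variable {S : Type*}

/-! If `[b]` is reached from `[a]` in `N` steps along a path `p`, prepending `p₀ … p_{N-1}` to a
point `y ∈ [b]` gives an `N`-th preimage of `y` in `[a]`, so `L_φᴺ 1_[a] ≥ e^{N·inf φ} 1_[b]`.
Shifting the Green series by `N` then gives `G(1_[a], ·) ≥ λ⁻ᴺ e^{N·inf φ} G(1_[b], ·)`, and
exchanging `a` and `b` gives the upper bound. The potential is bounded below because its
zeroth variation is finite. -/

section

variable {Adj : S → S → Prop}

theorem shiftMap_iterate_apply (n : ℕ) (x : MShift Adj) (i : ℕ) :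
    ((shiftMap Adj)^[n] x).1 i = x.1 (i + n) := by
  induction n generalizing i with
  | zero => rfl
  | succ n ih =>
    rw [Function.iterate_succ_apply']
    exact (ih (i + 1)).trans (congrArg x.1 (by omega))

theorem exists_shiftMap_iterate_eq_of_apply_zero_eq (p y : MShift Adj) (N : ℕ)
    (hy : y.1 0 = p.1 N) : ∃ z : MShift Adj, z.1 0 = p.1 0 ∧ (shiftMap Adj)^[N] z = y := by
  let z : ℕ → S := fun i => if i < N then p.1 i else y.1 (i - N)
  have hz_adj : ∀ i, Adj (z i) (z (i + 1)) := by
    intro i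
    rcases lt_trichotomy (i + 1) N with hi | hi | hi
    · simpa only [z, if_pos hi, if_pos (Nat.lt_of_succ_lt hi)] using p.2 i
    · simpa only [z, if_pos (Nat.lt_of_succ_le hi.le), lt_irrefl, if_false, Nat.sub_self, hy,
        hi] using p.2 i
    · simpa only [z, if_neg (by omega : ¬i < N), if_neg (by omega : ¬i + 1 < N),
        show i + 1 - N = i - N + 1 by omega] using y.2 (i - N)
  refine ⟨⟨z, hz_adj⟩, ?_, ?_⟩
  · rcases N.eq_zero_or_pos with rfl | hN
    · simpa [z] using hy
    · simp [z, hN]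
  · ext i
    rw [shiftMap_iterate_apply]
    simp [z]

theorem bddBelow_range_of_bddAbove_varSet_zero {φ : MShift Adj → ℝ}
    (h : BddAbove (varSet Adj φ 0)) : BddBelow (Set.range φ) := by
  rcases isEmpty_or_nonempty (MShift Adj) with _ | ⟨⟨x₀⟩⟩
  · simp [Set.range_eq_empty]
  obtain ⟨V, hV⟩ := h
  refine ⟨φ x₀ - V, ?_⟩
  rintro _ ⟨w, rfl⟩
  have hx₀w : |φ x₀ - φ w| ≤ V := hV ⟨x₀, w, fun i hi => absurd hi i.not_lt_zero, rfl⟩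
  linarith [le_abs_self (φ x₀ - φ w)]

variable (φ : MShift Adj → ℝ)

theorem ruelle_monotone : Monotone (Ruelle Adj φ) := fun _ _ h _ =>
  ENNReal.tsum_le_tsum fun y => mul_le_mul_right (h y.1) _

theorem ruelle_iterate_smul (n : ℕ) (c : ℝ≥0∞) (f : MShift Adj → ℝ≥0∞) :
    (Ruelle Adj φ)^[n] (c • f) = c • (Ruelle Adj φ)^[n] f := by
  have hcomm : Function.Commute (Ruelle Adj φ) (c • ·) := fun g => by
    ext x
    simp only [Ruelle, Pi.smul_apply, smul_eq_mul, ← ENNReal.tsum_mul_left, mul_left_comm]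
  exact hcomm.iterate_left n f

theorem exp_pow_mul_le_ruelle_iterate {m : ℝ} (hm : ∀ w, m ≤ φ w) (N : ℕ)
    (f : MShift Adj → ℝ≥0∞) (z : MShift Adj) :
    ENNReal.ofReal (Real.exp m) ^ N * f z ≤ (Ruelle Adj φ)^[N] f ((shiftMap Adj)^[N] z) := by
  induction N with
  | zero => simp
  | succ N ih =>
    rw [Function.iterate_succ_apply', Function.iterate_succ_apply', pow_succ', mul_assoc]
    calc ENNReal.ofReal (Real.exp m) * (ENNReal.ofReal (Real.exp m) ^ N * f z)
        ≤ ENNReal.ofReal (Real.exp (φ ((shiftMap Adj)^[N] z)))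
            * (Ruelle Adj φ)^[N] f ((shiftMap Adj)^[N] z) :=
          mul_le_mul' (ENNReal.ofReal_le_ofReal (Real.exp_le_exp.mpr (hm _))) ih
      _ ≤ Ruelle Adj φ ((Ruelle Adj φ)^[N] f) (shiftMap Adj ((shiftMap Adj)^[N] z)) :=
          ENNReal.le_tsum (⟨(shiftMap Adj)^[N] z, rfl⟩ :
            {y : MShift Adj // shiftMap Adj y = shiftMap Adj ((shiftMap Adj)^[N] z)})

theorem exp_pow_smul_cylInd_le_ruelle_iterate {m : ℝ} (hm : ∀ w, m ≤ φ w) (p : MShift Adj)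
    (N : ℕ) :
    ENNReal.ofReal (Real.exp m) ^ N • cylInd Adj (p.1 N)
      ≤ (Ruelle Adj φ)^[N] (cylInd Adj (p.1 0)) := by
  intro y
  by_cases hy : y.1 0 = p.1 N
  · obtain ⟨z, hz0, rfl⟩ := exists_shiftMap_iterate_eq_of_apply_zero_eq p y N hy
    have hza : cylInd Adj (p.1 0) z = 1 := by simp [cylInd, cylA, hz0]
    have hyb : cylInd Adj (p.1 N) ((shiftMap Adj)^[N] z) = 1 := by simp [cylInd, cylA, hy]
    simpa only [Pi.smul_apply, smul_eq_mul, hyb, hza] using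
      exp_pow_mul_le_ruelle_iterate φ hm N (cylInd Adj (p.1 0)) z
  · have hyb : cylInd Adj (p.1 N) y = 0 := by simp [cylInd, cylA, hy]
    simp [hyb]

theorem inv_pow_mul_green_le_of_smul_le_ruelle_iterate {lam : ℝ} (hlam : 0 < lam)
    {f g : MShift Adj → ℝ≥0∞} {c : ℝ≥0∞} (N : ℕ) (h : c • f ≤ (Ruelle Adj φ)^[N] g)
    (x : MShift Adj) :
    ENNReal.ofReal ((lam ^ N)⁻¹) * c * Green Adj φ lam f x ≤ Green Adj φ lam g x := by
  have hterm : ∀ n : ℕ, ENNReal.ofReal ((lam ^ N)⁻¹) * c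
        * (ENNReal.ofReal ((lam ^ n)⁻¹) * (Ruelle Adj φ)^[n] f x)
      ≤ ENNReal.ofReal ((lam ^ (n + N))⁻¹) * (Ruelle Adj φ)^[n + N] g x := by
    intro n
    have hL : c * (Ruelle Adj φ)^[n] f x ≤ (Ruelle Adj φ)^[n + N] g x := by
      rw [Function.iterate_add_apply, ← smul_eq_mul, ← Pi.smul_apply, ← ruelle_iterate_smul]
      exact (ruelle_monotone φ).iterate n h x
    rw [pow_add, mul_inv, ENNReal.ofReal_mul (by positivity)]
    calc ENNReal.ofReal ((lam ^ N)⁻¹) * c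
          * (ENNReal.ofReal ((lam ^ n)⁻¹) * (Ruelle Adj φ)^[n] f x)
        = ENNReal.ofReal ((lam ^ n)⁻¹) * ENNReal.ofReal ((lam ^ N)⁻¹)
            * (c * (Ruelle Adj φ)^[n] f x) := by ring
      _ ≤ _ := mul_le_mul_right hL _
  calc ENNReal.ofReal ((lam ^ N)⁻¹) * c * Green Adj φ lam f x
      ≤ ∑' n : ℕ, ENNReal.ofReal ((lam ^ (n + N))⁻¹) * (Ruelle Adj φ)^[n + N] g x := by
        rw [Green, ← ENNReal.tsum_mul_left]
        exact ENNReal.tsum_le_tsum hterm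
    _ ≤ Green Adj φ lam g x :=
        ENNReal.summable.tsum_le_tsum_of_inj (· + N) (add_left_injective N)
          (fun _ _ => zero_le) (fun _ => le_rfl) ENNReal.summable

theorem exists_pos_mul_green_cylInd_le (htrans : TransitiveShift Adj) {m : ℝ}
    (hm : ∀ w, m ≤ φ w) {lam : ℝ} (hlam : 0 < lam) (a b : S) :
    ∃ c : ℝ, 0 < c ∧ ∀ x : MShift Adj,
      ENNReal.ofReal c * Green Adj φ lam (cylInd Adj b) x
        ≤ Green Adj φ lam (cylInd Adj a) x := by
  obtain ⟨N, p, rfl, hpN⟩ := htrans a b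
  rw [shiftMap_iterate_apply, zero_add] at hpN
  subst hpN
  refine ⟨(lam ^ N)⁻¹ * Real.exp m ^ N, by positivity, fun x => ?_⟩
  rw [ENNReal.ofReal_mul (by positivity), ENNReal.ofReal_pow (Real.exp_nonneg m)]
  exact inv_pow_mul_green_le_of_smul_le_ruelle_iterate φ hlam N
    (exp_pow_smul_cylInd_le_ruelle_iterate φ hm p N) x

end

theorem green_cylinder_comparison_general
    (Adj : S → S → Prop) (htrans : TransitiveShift Adj)
    (φ : MShift Adj → ℝ) (hvar : SummableVar Adj φ) (lam : ℝ) (hlam : 0 < lam) :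
    ∀ a b : S, ∃ c C : ℝ, 0 < c ∧ c ≤ C ∧
      ∀ x : MShift Adj,
        ENNReal.ofReal c * Green Adj φ lam (cylInd Adj b) x
            ≤ Green Adj φ lam (cylInd Adj a) x ∧
        Green Adj φ lam (cylInd Adj a) x
            ≤ ENNReal.ofReal C * Green Adj φ lam (cylInd Adj b) x := by
  intro a b
  obtain ⟨m, hm⟩ := bddBelow_range_of_bddAbove_varSet_zero (hvar.1 0)
  have hφ : ∀ w, m ≤ φ w := fun w => hm (Set.mem_range_self w)
  obtain ⟨c, hc, hlower⟩ := exists_pos_mul_green_cylInd_le φ htrans hφ hlam a b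
  obtain ⟨c', hc', hupper⟩ := exists_pos_mul_green_cylInd_le φ htrans hφ hlam b a
  refine ⟨min c c'⁻¹, max c c'⁻¹, lt_min hc (inv_pos.mpr hc'), min_le_max, fun x => ⟨?_, ?_⟩⟩
  · refine le_trans ?_ (hlower x)
    gcongr
    exact min_le_left _ _
  · have hG : Green Adj φ lam (cylInd Adj a) x
        ≤ ENNReal.ofReal c'⁻¹ * Green Adj φ lam (cylInd Adj b) x := by
      rw [ENNReal.ofReal_inv_of_pos hc', ← ENNReal.mul_le_iff_le_inv
        (ENNReal.ofReal_pos.mpr hc').ne' ENNReal.ofReal_ne_top]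
      exact hupper x
    refine hG.trans ?_
    gcongr
    exact le_max_right _ _

/-- Comparison of Green's functions of cylinders: for all states `a, b` there are
constants `0 < c ≤ C` with `c G(1_[b], x|λ) ≤ G(1_[a], x|λ) ≤ C G(1_[b], x|λ)`
for all `x`. -/
theorem green_cylinder_comparison [Countable S]
    (Adj : S → S → Prop) (htrans : TransitiveShift Adj) (hloc : LocFin Adj)
    (φ : MShift Adj → ℝ) (hvar : SummableVar Adj φ) (lam : ℝ) (hlam : 0 < lam)
    (htransient : Transient Adj φ lam) :
    ∀ a b : S, ∃ c C : ℝ, 0 < c ∧ c ≤ C ∧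
      ∀ x : MShift Adj,
        ENNReal.ofReal c * Green Adj φ lam (cylInd Adj b) x
            ≤ Green Adj φ lam (cylInd Adj a) x ∧
        Green Adj φ lam (cylInd Adj a) x
            ≤ ENNReal.ofReal C * Green Adj φ lam (cylInd Adj b) x :=
  green_cylinder_comparison_general Adj htrans φ hvar lam hlam
end

section
/- Let (X⁺, T) be a one-sided countable Markov shift with potential φ, λ > 0, and μ a λ-conformal Radon measure. Let F ⊆ X⁺ and F₊ = {x : ∃n ≥ 0, Tⁿx ∈ F}. Then the restricted measure μ|_{F₊} is λ-excessive: (L_φ*(μ|_{F₊}))(f) ≤ λ μ|_{F₊}(f) for all f ∈ C_c⁺(X⁺); indeed (L_φ*(μ|_{F₊}))(f) = λ μ|_{T⁻¹F₊}(f) and T⁻¹F₊ ⊆ F₊. -/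
open MeasureTheory ENNReal Filter Topology

variable {S : Type*}

/-- The set of points whose orbit eventually enters `F`. -/
def hits (Adj : S → S → Prop) (F : Set (MShift Adj)) : Set (MShift Adj) :=
  {x | ∃ n : ℕ, (shiftMap Adj)^[n] x ∈ F}

/-- If `μ` is `λ`-conformal then the restriction `μ|_{F₊}` to the hitting set
`F₊ = {x : ∃ n, Tⁿx ∈ F}` is `λ`-excessive; indeed `T⁻¹F₊ ⊆ F₊` and
`(L_φ*(μ|_{F₊}))(f) = λ μ|_{T⁻¹F₊}(f) ≤ λ μ|_{F₊}(f)`. -/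
theorem restriction_to_hitting_set_excessive [Countable S] [MeasurableSpace S]
    [MeasurableSingletonClass S]
    (Adj : S → S → Prop) (φ : MShift Adj → ℝ) (lam : ℝ) (hlam : 0 < lam)
    (hT : Measurable (shiftMap Adj))
    (μ : Measure (MShift Adj))
    (hconf : ∀ f : MShift Adj → ℝ≥0∞, Measurable f →
      ∫⁻ x, Ruelle Adj φ f x ∂μ = ENNReal.ofReal lam * ∫⁻ x, f x ∂μ)
    (F : Set (MShift Adj)) (hF : MeasurableSet F) :
    shiftMap Adj ⁻¹' (hits Adj F) ⊆ hits Adj F ∧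
    ∀ f : MShift Adj → ℝ≥0∞, Measurable f →
      (∫⁻ x, Ruelle Adj φ f x ∂(μ.restrict (hits Adj F))
          = ENNReal.ofReal lam *
            ∫⁻ x, f x ∂(μ.restrict (shiftMap Adj ⁻¹' (hits Adj F)))) ∧
      ∫⁻ x, Ruelle Adj φ f x ∂(μ.restrict (hits Adj F))
          ≤ ENNReal.ofReal lam * ∫⁻ x, f x ∂(μ.restrict (hits Adj F)) := by
  have hiter : ∀ n, Measurable ((shiftMap Adj)^[n]) := fun n => hT.iterate n
  have hEmeas : MeasurableSet (hits Adj F) := by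
    have h : hits Adj F = ⋃ n : ℕ, (shiftMap Adj)^[n] ⁻¹' F := by
      ext x; simp [hits, Set.mem_iUnion, Set.mem_preimage]
    rw [h]
    exact MeasurableSet.iUnion fun n => (hiter n) hF
  have hpre : MeasurableSet (shiftMap Adj ⁻¹' (hits Adj F)) := hT hEmeas
  have hsub : shiftMap Adj ⁻¹' (hits Adj F) ⊆ hits Adj F := by
    intro x hx
    obtain ⟨n, hn⟩ := hx
    exact ⟨n + 1, by rwa [Function.iterate_succ_apply]⟩
  refine ⟨hsub, fun f hf => ?_⟩
  have hg : Measurable ((shiftMap Adj ⁻¹' (hits Adj F)).indicator f) := hf.indicator hpre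
  have key : ∀ x, Ruelle Adj φ ((shiftMap Adj ⁻¹' (hits Adj F)).indicator f) x
      = (hits Adj F).indicator (Ruelle Adj φ f) x := by
    intro x
    by_cases hx : x ∈ hits Adj F
    · rw [Set.indicator_of_mem hx]
      unfold Ruelle
      congr 1; funext y
      rw [Set.indicator_of_mem (show y.1 ∈ shiftMap Adj ⁻¹' (hits Adj F) by
        simp only [Set.mem_preimage, y.2]; exact hx)]
    · rw [Set.indicator_of_notMem hx]
      unfold Ruelle
      refine ENNReal.tsum_eq_zero.mpr fun y => ?_
      rw [Set.indicator_of_notMem, mul_zero]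
      simp only [Set.mem_preimage, y.2]; exact hx
  have h1 : ∫⁻ x, Ruelle Adj φ f x ∂(μ.restrict (hits Adj F))
      = ENNReal.ofReal lam * ∫⁻ x, f x ∂(μ.restrict (shiftMap Adj ⁻¹' (hits Adj F))) := by
    rw [← lintegral_indicator hEmeas, ← lintegral_indicator hpre]
    rw [show (fun x => (hits Adj F).indicator (Ruelle Adj φ f) x)
        = fun x => Ruelle Adj φ ((shiftMap Adj ⁻¹' (hits Adj F)).indicator f) x from
      funext fun x => (key x).symm]
    exact hconf _ hg
  refine ⟨h1, h1 ▸ mul_le_mul_right (lintegral_mono' (Measure.restrict_mono hsub le_rfl) le_rfl) _⟩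
end

section
/- Let (X⁺, T) be a one-sided countable Markov shift and φ a Borel potential. Suppose ν is a probability measure on X⁺ with ν(T⁻¹A) = 0 ⇔ ν(A) = 0 (non-singularity) and L_φ* ν = λν for some λ > 0. Then ν is a Dobrushin–Lanford–Ruelle (DLR) measure for φ: for all n ≥ 1 and ν-a.e. x, E_ν[1_{[x₀,…,x_{n−1}]} | T⁻ⁿℬ](x) = e^{φₙ(x)} / Σ_{y : Tⁿy = Tⁿx} e^{φₙ(y)}, where ℬ is the Borel σ-algebra and φₙ the n-th Birkhoff sum. -/
open MeasureTheory ENNReal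

variable {S : Type*}

/-- The `n`-th Birkhoff sum of `φ`. -/
noncomputable def birk (Adj : S → S → Prop) (φ : MShift Adj → ℝ) (n : ℕ)
    (x : MShift Adj) : ℝ :=
  ∑ i ∈ Finset.range n, φ ((shiftMap Adj)^[i] x)

/-!
Iterating the eigenmeasure relation gives `∫_C Lⁿf dν = λⁿ ∫_{T⁻ⁿC} f dν`: up to the factor `λⁿ`,
`Lⁿ` is the adjoint of composition with `Tⁿ`. Since moreover `Lⁿ(h ∘ Tⁿ) = Lⁿ1 · h`, the function
`(Lⁿ1_A / Lⁿ1) ∘ Tⁿ` has the defining integrals of `E_ν[1_A | T⁻ⁿℬ]`. When `A` is a cylinder of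
length `n` containing `x`, `x` is the only `Tⁿ`-preimage of `Tⁿx` in `A`, so `Lⁿ1_A (Tⁿx) = e^{φₙ(x)}`,
while `Lⁿ1 (Tⁿx) = Σ_{Tⁿy = Tⁿx} e^{φₙ(y)}`. Countably many cylinders cover the shift.
-/

section

variable {α β : Type*} [MeasurableSpace α] [mβ : MeasurableSpace β]
  {ν : Measure α} {μ : Measure β} {T : α → β} {L : (α → ℝ≥0∞) → β → ℝ≥0∞} {c : ℝ≥0∞}

theorem condExp_indicator_ae_eq_ratio_comp [IsFiniteMeasure ν] (hT : Measurable T)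
    (hL_mono : Monotone L) (hL_meas : ∀ f, Measurable f → Measurable (L f))
    (hc₀ : c ≠ 0) (hc : c ≠ ∞)
    (hL_dual : ∀ f, Measurable f → ∀ C, MeasurableSet C →
      ∫⁻ y in C, L f y ∂μ = c * ∫⁻ x in T ⁻¹' C, f x ∂ν)
    (hL_comp : ∀ h : β → ℝ≥0∞, Measurable h → ∀ y, L (h ∘ T) y = L 1 y * h y)
    {A : Set α} (hA : MeasurableSet A) :
    (fun x => (L (A.indicator 1) (T x) / L 1 (T x)).toReal) =ᵐ[ν]
      ν[A.indicator fun _ => (1 : ℝ) | mβ.comap T] := by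
  set r : β → ℝ≥0∞ := fun y => L (A.indicator 1) y / L 1 y
  have hr_meas : Measurable r :=
    (hL_meas _ (measurable_one.indicator hA)).div (hL_meas _ measurable_one)
  have hLA_le : ∀ y, L (A.indicator 1) y ≤ L 1 y :=
    hL_mono (Set.indicator_le_self A 1)
  have hr_le : ∀ y, r y ≤ 1 := fun y =>
    ENNReal.div_le_of_le_mul (by rw [one_mul]; exact hLA_le y)
  have hL_one_fin : ∀ᵐ y ∂μ, L 1 y ≠ ∞ := by
    have h := hL_dual 1 measurable_one Set.univ MeasurableSet.univ
    simp only [Set.preimage_univ, Measure.restrict_univ, Pi.one_apply, lintegral_one] at h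
    refine (ae_lt_top (hL_meas _ measurable_one) ?_).mono fun y hy => hy.ne
    rw [h]
    exact mul_ne_top hc (measure_ne_top ν _)
  have hL_r : ∀ᵐ y ∂μ, L (r ∘ T) y = L (A.indicator 1) y := by
    filter_upwards [hL_one_fin] with y hy
    rw [hL_comp r hr_meas]
    exact ENNReal.mul_div_cancel' (fun h0 => le_antisymm (h0 ▸ hLA_le y) bot_le)
      fun htop => absurd htop hy
  have h_lintegral : ∀ C, MeasurableSet C →
      ∫⁻ x in T ⁻¹' C, r (T x) ∂ν = (ν.restrict (T ⁻¹' C)) A := by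
    intro C hC
    apply (ENNReal.mul_right_inj hc₀ hc).mp
    change c * ∫⁻ x in T ⁻¹' C, (r ∘ T) x ∂ν = _
    rw [← lintegral_indicator_one hA, ← hL_dual _ (hr_meas.comp hT) C hC,
      ← hL_dual _ (measurable_one.indicator hA) C hC]
    exact setLIntegral_congr_fun_ae hC (hL_r.mono fun y hy _ => hy)
  have hm : mβ.comap T ≤ ‹MeasurableSpace α› := hT.comap_le
  refine ae_eq_condExp_of_forall_setIntegral_eq hm ((integrable_const 1).indicator hA)
    (fun s _ _ => ?_) ?_ ?_
  · exact (integrable_const 1).mono' (hr_meas.ennreal_toReal.comp hT).aestronglyMeasurable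
      (Filter.Eventually.of_forall fun x => by
        simpa using ENNReal.toReal_mono one_ne_top (hr_le (T x))) |>.integrableOn
  · rintro _ ⟨C, hC, rfl⟩ _
    change ∫ x in T ⁻¹' C, (r (T x)).toReal ∂ν = _
    rw [integral_toReal (f := fun x => r (T x)) (hr_meas.comp hT).aemeasurable
        (Filter.Eventually.of_forall fun x => (hr_le (T x)).trans_lt one_lt_top),
      h_lintegral C hC]
    exact (integral_indicator_one hA).symm
  · exact (hr_meas.ennreal_toReal.comp (comap_measurable T)).aestronglyMeasurable

end

namespace MarkovShift

variable {Adj : S → S → Prop}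

theorem shiftMap_iterate_apply (n : ℕ) (x : MShift Adj) (i : ℕ) :
    ((shiftMap Adj)^[n] x).1 i = x.1 (i + n) := by
  induction n generalizing x with
  | zero => rfl
  | succ n ih => rw [Function.iterate_succ_apply, ih]; rfl

def cons (a : S) (x : MShift Adj) (h : Adj a (x.1 0)) : MShift Adj :=
  ⟨fun | 0 => a | j + 1 => x.1 j, fun | 0 => h | j + 1 => x.2 j⟩

theorem shiftMap_cons (a : S) (x : MShift Adj) (h : Adj a (x.1 0)) :
    shiftMap Adj (cons a x h) = x :=
  rfl

def shiftPreimageEquiv (x : MShift Adj) :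
    {y : MShift Adj // shiftMap Adj y = x} ≃ {a : S // Adj a (x.1 0)} where
  toFun y := ⟨y.1.1 0, by obtain ⟨y, rfl⟩ := y; exact y.2 0⟩
  invFun a := ⟨cons a.1 x a.2, shiftMap_cons _ _ _⟩
  left_inv := by
    rintro ⟨y, rfl⟩
    ext (_ | _) <;> rfl
  right_inv _ := rfl

theorem ruelle_eq_tsum_dite (φ : MShift Adj → ℝ) (f : MShift Adj → ℝ≥0∞) (x : MShift Adj)
    [DecidablePred fun a : S => Adj a (x.1 0)] :
    Ruelle Adj φ f x = ∑' a : S, if h : Adj a (x.1 0) then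
      ENNReal.ofReal (Real.exp (φ (cons a x h))) * f (cons a x h) else 0 := by
  rw [Ruelle, ← (shiftPreimageEquiv x).symm.tsum_eq]
  refine Eq.trans ?_ (tsum_subtype_eq_of_support_subset (s := {a : S | Adj a (x.1 0)})
    fun a ha => by_contra fun h => ha (dif_neg h))
  exact tsum_congr fun a => by rw [dif_pos a.2]; rfl

section Measurability

variable [MeasurableSpace S]

theorem measurable_coord (i : ℕ) : Measurable fun x : MShift Adj => x.1 i :=
  (measurable_pi_apply i).comp measurable_subtype_coe

theorem measurable_shiftMap : Measurable (shiftMap Adj) :=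
  (measurable_pi_lambda _ fun i => measurable_coord (i + 1)).subtype_mk

theorem measurable_cons (a : S) :
    Measurable fun x : {x : MShift Adj // Adj a (x.1 0)} => cons a x.1 x.2 :=
  (measurable_pi_lambda _ fun
    | 0 => measurable_const
    | j + 1 => (measurable_coord j).comp measurable_subtype_coe).subtype_mk

theorem measurable_ruelle [Countable S] [MeasurableSingletonClass S] {φ : MShift Adj → ℝ}
    (hφ : Measurable φ) {f : MShift Adj → ℝ≥0∞} (hf : Measurable f) :
    Measurable (Ruelle Adj φ f) := by
  classical
  simp_rw [funext fun x => ruelle_eq_tsum_dite φ f x]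
  refine Measurable.tsum fun a => Measurable.dite (s := {x : MShift Adj | Adj a (x.1 0)})
    (f := fun x => ENNReal.ofReal (Real.exp (φ (cons a x.1 x.2))) * f (cons a x.1 x.2))
    ?_ measurable_const (measurable_coord 0 (Set.to_countable {b | Adj a b}).measurableSet)
  exact (measurable_ofReal.comp (Real.measurable_exp.comp (hφ.comp (measurable_cons a)))).mul
    (hf.comp (measurable_cons a))

end Measurability

section RuellePow

variable (φ : MShift Adj → ℝ)

noncomputable def ruellePow (n : ℕ) (f : MShift Adj → ℝ≥0∞) (x : MShift Adj) : ℝ≥0∞ :=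
  ∑' y : {y : MShift Adj // (shiftMap Adj)^[n] y = x},
    ENNReal.ofReal (Real.exp (birk Adj φ n y.1)) * f y.1

theorem ruellePow_zero (f : MShift Adj → ℝ≥0∞) : ruellePow φ 0 f = f := by
  funext x
  rw [ruellePow, tsum_eq_single (⟨x, rfl⟩ : {y // (shiftMap Adj)^[0] y = x})
    fun y hy => absurd (Subtype.ext y.2) hy]
  simp [birk]

theorem birk_succ (n : ℕ) (x : MShift Adj) :
    birk Adj φ (n + 1) x = birk Adj φ n x + φ ((shiftMap Adj)^[n] x) :=
  Finset.sum_range_succ _ _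

def iteratePreimageSigmaEquiv (n : ℕ) (x : MShift Adj) :
    (Σ y : {y : MShift Adj // shiftMap Adj y = x},
        {z : MShift Adj // (shiftMap Adj)^[n] z = y.1}) ≃
      {z : MShift Adj // (shiftMap Adj)^[n + 1] z = x} where
  toFun p := ⟨p.2.1, by rw [Function.iterate_succ_apply', p.2.2, p.1.2]⟩
  invFun z := ⟨⟨(shiftMap Adj)^[n] z.1, by
    rw [← Function.iterate_succ_apply' (shiftMap Adj), z.2]⟩, ⟨z.1, rfl⟩⟩
  left_inv := by
    rintro ⟨⟨y, hy⟩, ⟨z, hz⟩⟩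
    dsimp only at hz
    subst hz
    rfl
  right_inv _ := rfl

theorem ruellePow_succ (n : ℕ) (f : MShift Adj → ℝ≥0∞) :
    ruellePow φ (n + 1) f = Ruelle Adj φ (ruellePow φ n f) := by
  funext x
  rw [ruellePow, ← (iteratePreimageSigmaEquiv n x).tsum_eq, ENNReal.tsum_sigma']
  refine tsum_congr fun y => ?_
  rw [ruellePow, ← ENNReal.tsum_mul_left]
  refine tsum_congr fun z => ?_
  simp only [iteratePreimageSigmaEquiv, Equiv.coe_fn_mk]
  rw [birk_succ, Real.exp_add, ENNReal.ofReal_mul (Real.exp_nonneg _), z.2]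
  ring

theorem monotone_ruellePow (n : ℕ) : Monotone (ruellePow φ n) :=
  fun _ _ hfg _ => ENNReal.tsum_le_tsum fun _ => mul_le_mul_right (hfg _) _

theorem ruellePow_comp_iterate (n : ℕ) (h : MShift Adj → ℝ≥0∞) (x : MShift Adj) :
    ruellePow φ n (h ∘ (shiftMap Adj)^[n]) x = ruellePow φ n 1 x * h x := by
  rw [ruellePow, ruellePow, ← ENNReal.tsum_mul_right]
  refine tsum_congr fun y => ?_
  rw [Function.comp_apply, y.2, Pi.one_apply, mul_one]

theorem ruellePow_indicator_preimage (n : ℕ) (f : MShift Adj → ℝ≥0∞) (C : Set (MShift Adj)) :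
    ruellePow φ n (((shiftMap Adj)^[n] ⁻¹' C).indicator f) = C.indicator (ruellePow φ n f) := by
  funext x
  by_cases hx : x ∈ C
  · rw [Set.indicator_of_mem hx]
    refine tsum_congr fun y => ?_
    rw [Set.indicator_of_mem (show y.1 ∈ _ ⁻¹' C by rw [Set.mem_preimage, y.2]; exact hx)]
  · rw [Set.indicator_of_notMem hx, ruellePow, ENNReal.tsum_eq_zero]
    intro y
    rw [Set.indicator_of_notMem (show y.1 ∉ _ ⁻¹' C by rw [Set.mem_preimage, y.2]; exact hx),
      mul_zero]

variable [MeasurableSpace S] [Countable S] [MeasurableSingletonClass S] {φ}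

theorem measurable_ruellePow (hφ : Measurable φ) (n : ℕ) {f : MShift Adj → ℝ≥0∞}
    (hf : Measurable f) : Measurable (ruellePow φ n f) := by
  induction n with
  | zero => rwa [ruellePow_zero]
  | succ n ih => rw [ruellePow_succ]; exact measurable_ruelle hφ ih

variable {ν : Measure (MShift Adj)} {c : ℝ≥0∞}

theorem lintegral_ruellePow (hφ : Measurable φ)
    (hconf : ∀ f, Measurable f → ∫⁻ x, Ruelle Adj φ f x ∂ν = c * ∫⁻ x, f x ∂ν)
    (n : ℕ) {f : MShift Adj → ℝ≥0∞} (hf : Measurable f) :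
    ∫⁻ x, ruellePow φ n f x ∂ν = c ^ n * ∫⁻ x, f x ∂ν := by
  induction n with
  | zero => rw [ruellePow_zero, pow_zero, one_mul]
  | succ n ih =>
    rw [ruellePow_succ, hconf _ (measurable_ruellePow hφ n hf), ih, pow_succ, mul_comm _ c,
      mul_assoc]

theorem setLIntegral_ruellePow (hφ : Measurable φ)
    (hconf : ∀ f, Measurable f → ∫⁻ x, Ruelle Adj φ f x ∂ν = c * ∫⁻ x, f x ∂ν)
    (n : ℕ) {f : MShift Adj → ℝ≥0∞} (hf : Measurable f)
    {C : Set (MShift Adj)} (hC : MeasurableSet C) :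
    ∫⁻ x in C, ruellePow φ n f x ∂ν = c ^ n * ∫⁻ x in (shiftMap Adj)^[n] ⁻¹' C, f x ∂ν := by
  have hpre : MeasurableSet ((shiftMap Adj)^[n] ⁻¹' C) := measurable_shiftMap.iterate n hC
  rw [← lintegral_indicator hC, ← ruellePow_indicator_preimage,
    lintegral_ruellePow hφ hconf n (hf.indicator hpre), lintegral_indicator hpre]

end RuellePow

section Cylinder

def cylinder {n : ℕ} (w : Fin n → S) : Set (MShift Adj) :=
  {y | ∀ i : Fin n, y.1 i = w i}

theorem measurableSet_cylinder [MeasurableSpace S] [MeasurableSingletonClass S] {n : ℕ}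
    (w : Fin n → S) : MeasurableSet (cylinder (Adj := Adj) w) := by
  rw [cylinder, Set.ofPred_forall]
  exact MeasurableSet.iInter fun i => measurable_coord i (measurableSet_singleton (w i))

theorem eq_of_mem_cylinder_of_iterate_eq {n : ℕ} {w : Fin n → S} {x y : MShift Adj}
    (hx : x ∈ cylinder w) (hy : y ∈ cylinder w)
    (hxy : (shiftMap Adj)^[n] y = (shiftMap Adj)^[n] x) : y = x := by
  ext i
  obtain hi | hi := lt_or_ge i n
  · exact (hy ⟨i, hi⟩).trans (hx ⟨i, hi⟩).symm
  · obtain ⟨j, rfl⟩ := Nat.exists_eq_add_of_le' hi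
    rw [← shiftMap_iterate_apply, ← shiftMap_iterate_apply, hxy]

theorem ruellePow_indicator_cylinder (φ : MShift Adj → ℝ) {n : ℕ} {w : Fin n → S}
    {x : MShift Adj} (hx : x ∈ cylinder w) :
    ruellePow φ n ((cylinder w).indicator 1) ((shiftMap Adj)^[n] x)
      = ENNReal.ofReal (Real.exp (birk Adj φ n x)) := by
  rw [ruellePow, tsum_eq_single (⟨x, rfl⟩ : {y // (shiftMap Adj)^[n] y = (shiftMap Adj)^[n] x})]
  · rw [Set.indicator_of_mem hx, Pi.one_apply, mul_one]
  · intro y hy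
    have hyw : y.1 ∉ cylinder w := fun hyw =>
      hy (Subtype.ext (eq_of_mem_cylinder_of_iterate_eq hx hyw y.2))
    rw [Set.indicator_of_notMem hyw, mul_zero]

-- Both sides vanish when the series diverges.
theorem toReal_ruellePow_one (φ : MShift Adj → ℝ) (n : ℕ) (x : MShift Adj) :
    (ruellePow φ n 1 x).toReal
      = ∑' y : {y : MShift Adj // (shiftMap Adj)^[n] y = x}, Real.exp (birk Adj φ n y.1) := by
  simp only [ruellePow, Pi.one_apply, mul_one]
  rw [ENNReal.tsum_toReal_eq fun _ => ENNReal.ofReal_ne_top]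
  exact tsum_congr fun y => ENNReal.toReal_ofReal (Real.exp_nonneg _)

theorem condExp_indicator_cylinder_ae_eq [MeasurableSpace S] [Countable S]
    [MeasurableSingletonClass S] {φ : MShift Adj → ℝ} (hφ : Measurable φ)
    {ν : Measure (MShift Adj)} [IsFiniteMeasure ν] {c : ℝ≥0∞} (hc₀ : c ≠ 0) (hc : c ≠ ∞)
    (hconf : ∀ f, Measurable f → ∫⁻ x, Ruelle Adj φ f x ∂ν = c * ∫⁻ x, f x ∂ν)
    {n : ℕ} (w : Fin n → S) :
    ∀ᵐ x ∂ν, x ∈ cylinder w →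
      (ν[(cylinder w).indicator fun _ => (1 : ℝ) |
          MeasurableSpace.comap ((shiftMap Adj)^[n]) inferInstance]) x
        = Real.exp (birk Adj φ n x) /
            ∑' y : {y : MShift Adj // (shiftMap Adj)^[n] y = (shiftMap Adj)^[n] x},
              Real.exp (birk Adj φ n y.1) := by
  filter_upwards [condExp_indicator_ae_eq_ratio_comp (measurable_shiftMap.iterate n)
    (monotone_ruellePow φ n) (fun _ => measurable_ruellePow hφ n) (pow_ne_zero n hc₀)
    (pow_ne_top hc) (fun _ hf _ hC => setLIntegral_ruellePow hφ hconf n hf hC)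
    (fun h _ => ruellePow_comp_iterate φ n h) (measurableSet_cylinder w)] with x hx hxw
  rw [← hx, ENNReal.toReal_div, ruellePow_indicator_cylinder φ hxw,
    ENNReal.toReal_ofReal (Real.exp_nonneg _), toReal_ruellePow_one]

end Cylinder

end MarkovShift

theorem conformal_is_DLR_general [Countable S] [MeasurableSpace S] [MeasurableSingletonClass S]
    (Adj : S → S → Prop)
    (φ : MShift Adj → ℝ) (hφ : Measurable φ)
    (ν : Measure (MShift Adj)) [IsProbabilityMeasure ν]
    (lam : ℝ) (hlam : 0 < lam)
    (hconf : ∀ f : MShift Adj → ℝ≥0∞, Measurable f →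
      ∫⁻ x, Ruelle Adj φ f x ∂ν = ENNReal.ofReal lam * ∫⁻ x, f x ∂ν) :
    ∀ n : ℕ, 1 ≤ n → ∀ᵐ x ∂ν,
      (ν[Set.indicator {y : MShift Adj | ∀ i < n, y.1 i = x.1 i} (fun _ => (1 : ℝ)) |
          MeasurableSpace.comap ((shiftMap Adj)^[n]) inferInstance]) x
        = Real.exp (birk Adj φ n x) /
            ∑' y : {y : MShift Adj // (shiftMap Adj)^[n] y = (shiftMap Adj)^[n] x},
              Real.exp (birk Adj φ n y.1) := by
  intro n _
  have hcyl := ae_all_iff.mpr fun w : Fin n → S =>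
    MarkovShift.condExp_indicator_cylinder_ae_eq hφ (ENNReal.ofReal_pos.mpr hlam).ne'
      ENNReal.ofReal_ne_top hconf w
  filter_upwards [hcyl] with x hx
  have hset : {y : MShift Adj | ∀ i < n, y.1 i = x.1 i} = MarkovShift.cylinder fun i => x.1 i :=
    Set.ext fun _ => ⟨fun h i => h i i.2, fun h i hi => h ⟨i, hi⟩⟩
  rw [hset]
  exact hx _ fun _ => rfl

/-- A non-singular probability eigenmeasure of the Ruelle operator is a
Dobrushin–Lanford–Ruelle measure: for all `n ≥ 1` and a.e. `x`,
`E_ν[1_{[x₀,…,x_{n−1}]} | T⁻ⁿℬ](x) = e^{φₙ(x)} / Σ_{Tⁿy = Tⁿx} e^{φₙ(y)}`. -/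
theorem conformal_is_DLR [Countable S] [MeasurableSpace S] [MeasurableSingletonClass S]
    (Adj : S → S → Prop)
    (hlocF : ∀ a : S, {b : S | Adj a b}.Finite)
    (hlocB : ∀ b : S, {a : S | Adj a b}.Finite)
    (φ : MShift Adj → ℝ) (hφ : Measurable φ)
    (hT : Measurable (shiftMap Adj))
    (ν : Measure (MShift Adj)) [IsProbabilityMeasure ν]
    (hns : ∀ A : Set (MShift Adj), MeasurableSet A →
      (ν A = 0 ↔ ν (shiftMap Adj ⁻¹' A) = 0))
    (lam : ℝ) (hlam : 0 < lam)
    (hconf : ∀ f : MShift Adj → ℝ≥0∞, Measurable f →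
      ∫⁻ x, Ruelle Adj φ f x ∂ν = ENNReal.ofReal lam * ∫⁻ x, f x ∂ν) :
    ∀ n : ℕ, 1 ≤ n → ∀ᵐ x ∂ν,
      (ν[Set.indicator {y : MShift Adj | ∀ i < n, y.1 i = x.1 i} (fun _ => (1 : ℝ)) |
          MeasurableSpace.comap ((shiftMap Adj)^[n]) inferInstance]) x
        = Real.exp (birk Adj φ n x) /
            ∑' y : {y : MShift Adj // (shiftMap Adj)^[n] y = (shiftMap Adj)^[n] x},
              Real.exp (birk Adj φ n y.1) :=
  conformal_is_DLR_general Adj φ hφ ν lam hlam hconf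
end
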